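/- arXiv:2511.15623 — 2 statements merged into one kernel-verified Lean document; each statement's English description precedes it below -/
import Mathlib

section
/- Let D be a finite database instance with all tuples endogenous and Q a Boolean monotone query with Q(D). For every t ∈ D and every Γ ⊆ D with t ∉ Γ: Γ is a subset-minimal contingency set for t if and only if D ∖ (Γ ∪ {t}) is an S-repair of D w.r.t. the denial constraint ¬Q. -/
open Classical

variable {α : Type*} [DecidableEq α]

/-- `Γ` is a contingency set for the tuple `t` (all tuples endogenous):
`Γ ⊆ D`, `t ∉ Γ`, `Q(D ∖ Γ)` and `¬ Q(D ∖ (Γ ∪ {t}))`. -/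
def Contingency (Q : Finset α → Prop) (D : Finset α) (t : α) (Γ : Finset α) : Prop :=
  Γ ⊆ D ∧ t ∉ Γ ∧ Q (D \ Γ) ∧ ¬ Q (D \ (Γ ∪ {t}))

/-- `D'` is an S-repair of `D` w.r.t. the denial constraint `¬Q`:
a subset-maximal subset of `D` not satisfying `Q`. -/
def IsSRepair (Q : Finset α → Prop) (D D' : Finset α) : Prop :=
  D' ⊆ D ∧ ¬ Q D' ∧ ∀ D'', D'' ⊆ D → D' ⊂ D'' → Q D''

theorem stmt5 (Q : Finset α → Prop)
    (hmono : ∀ S₁ S₂ : Finset α, S₁ ⊆ S₂ → Q S₁ → Q S₂)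
    (D : Finset α) (hQ : Q D) (t : α) (ht : t ∈ D)
    (Γ : Finset α) (hΓ : Γ ⊆ D) (htΓ : t ∉ Γ) :
    (Contingency Q D t Γ ∧ ∀ Γ' ⊂ Γ, ¬ Contingency Q D t Γ')
      ↔ IsSRepair Q D (D \ (Γ ∪ {t})) := by
  constructor
  · rintro ⟨⟨-, -, hQΓ, hnQ⟩, hmin⟩
    refine ⟨Finset.sdiff_subset, hnQ, ?_⟩
    intro D'' hD'' hss
    by_cases htD : t ∈ D''
    · -- D \ Γ ⊆ D''
      refine hmono _ _ ?_ hQΓ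
      intro x hx
      rw [Finset.mem_sdiff] at hx
      by_cases hxt : x = t
      · exact hxt ▸ htD
      · exact hss.1 (Finset.mem_sdiff.mpr ⟨hx.1, by
          simp [hx.2, hxt]⟩)
    · -- t ∉ D''; set Γ' = Γ \ D'', a proper subset of Γ
      set Γ' : Finset α := Γ \ D'' with hΓ'def
      have hΓ'sub : Γ' ⊆ Γ := Finset.sdiff_subset
      have hss' : Γ' ⊂ Γ := by
        obtain ⟨x, hxD'', hxnot⟩ := Finset.exists_of_ssubset hss
        have hxD : x ∈ D := hD'' hxD''
        have hxΓ : x ∈ Γ := by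
          rw [Finset.mem_sdiff, not_and, not_not] at hxnot
          have := hxnot hxD
          simp only [Finset.mem_union, Finset.mem_singleton] at this
          rcases this with h | h
          · exact h
          · exact absurd (h ▸ hxD'') htD
        exact ⟨hΓ'sub, fun hsub => (Finset.mem_sdiff.mp (hsub hxΓ)).2 hxD''⟩
      have hnc := hmin Γ' hss'
      rw [Contingency] at hnc
      push_neg at hnc
      have h1 : Γ' ⊆ D := hΓ'sub.trans hΓ
      have h2 : t ∉ Γ' := fun h => htΓ (hΓ'sub h)
      have h3 : Q (D \ Γ') :=
        hmono _ _ (Finset.sdiff_subset_sdiff (le_refl D) hΓ'sub) hQΓ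
      have h4 := hnc h1 h2 h3

      refine hmono _ _ ?_ h4
      intro x hx
      rw [Finset.mem_sdiff] at hx
      simp only [Finset.mem_union, Finset.mem_singleton, not_or, hΓ'def,
        Finset.mem_sdiff, not_and, not_not] at hx
      obtain ⟨hxD, hxΓ', hxt⟩ := hx
      by_cases hxΓ : x ∈ Γ
      · exact hxΓ' hxΓ
      · exact hss.1 (Finset.mem_sdiff.mpr ⟨hxD, by simp [hxΓ, hxt]⟩)
  · rintro ⟨hsub, hnQ, hmax⟩
    have hQΓ : Q (D \ Γ) := by
      refine hmax _ Finset.sdiff_subset ⟨Finset.sdiff_subset_sdiff (le_refl D)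
        Finset.subset_union_left, fun hsub' => ?_⟩
      have : t ∈ D \ Γ := Finset.mem_sdiff.mpr ⟨ht, htΓ⟩
      have := hsub' this
      simp at this
    refine ⟨⟨hΓ, htΓ, hQΓ, hnQ⟩, ?_⟩
    rintro Γ' hss ⟨hΓ'D, htΓ', -, hnQ'⟩
    apply hnQ'
    refine hmax _ Finset.sdiff_subset ⟨Finset.sdiff_subset_sdiff (le_refl D)
      (Finset.union_subset_union_left hss.1), ?_⟩
    intro hsub'
    obtain ⟨x, hxΓ, hxΓ'⟩ := Finset.exists_of_ssubset hss
    have hxD : x ∈ D := hΓ hxΓ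
    have hxt : x ≠ t := fun h => htΓ (h ▸ hxΓ)
    have hx : x ∈ D \ (Γ' ∪ {t}) := Finset.mem_sdiff.mpr ⟨hxD, by simp [hxΓ', hxt]⟩
    have := hsub' hx
    rw [Finset.mem_sdiff] at this
    exact this.2 (by simp [hxΓ])
end

section
/- Let D be a finite database instance with all tuples endogenous and Q a Boolean monotone query with Q(D). A set N ⊆ D is a necessary-set of minimum cardinality among all necessary-sets if and only if D ∖ N is a C-repair of D w.r.t. the denial constraint ¬Q. -/
open Classical

variable {α : Type*} [DecidableEq α]

/-- `N` is a necessary-set (all tuples endogenous): `N ⊆ D` and `¬ Q(D ∖ N)`. -/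
def NecessarySet (Q : Finset α → Prop) (D : Finset α) (N : Finset α) : Prop :=
  N ⊆ D ∧ ¬ Q (D \ N)

/-- `D'` is a C-repair of `D` w.r.t. `¬Q`: an S-repair of maximum cardinality. -/
def IsCRepair (Q : Finset α → Prop) (D D' : Finset α) : Prop :=
  IsSRepair Q D D' ∧ ∀ D'', IsSRepair Q D D'' → D''.card ≤ D'.card

/-- Any `¬Q` subset of `D` extends to an S-repair of at least its cardinality. -/
lemma exists_srepair_above (Q : Finset α → Prop) (D S : Finset α)
    (hS : S ⊆ D) (hQS : ¬ Q S) :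
    ∃ T, IsSRepair Q D T ∧ S.card ≤ T.card := by
  classical
  set P : Finset (Finset α) := D.powerset.filter (fun T => S ⊆ T ∧ ¬ Q T) with hP
  have hSP : S ∈ P := by
    simp [hP, Finset.mem_powerset, hS, hQS]
  obtain ⟨T, hTP, hTmax⟩ := P.exists_max_image Finset.card ⟨S, hSP⟩
  simp only [hP, Finset.mem_filter, Finset.mem_powerset] at hTP
  obtain ⟨hTD, hST, hQT⟩ := hTP
  refine ⟨T, ⟨hTD, hQT, ?_⟩, hTmax S hSP⟩
  intro D'' hD'' hsub
  by_contra hQD''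
  have hmem : D'' ∈ P := by
    simp [hP, Finset.mem_powerset, hD'', hST.trans hsub.subset, hQD'']
  have := hTmax D'' hmem
  have := Finset.card_lt_card hsub
  omega

theorem stmt6 (Q : Finset α → Prop)
    (hmono : ∀ S₁ S₂ : Finset α, S₁ ⊆ S₂ → Q S₁ → Q S₂)
    (D : Finset α) (hQ : Q D) (N : Finset α) (hN : N ⊆ D) :
    (NecessarySet Q D N ∧ ∀ N', NecessarySet Q D N' → N.card ≤ N'.card)
      ↔ IsCRepair Q D (D \ N) := by
  classical
  constructor
  · rintro ⟨⟨-, hnQ⟩, hmin⟩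
    have hcardN : (D \ N).card = D.card - N.card := Finset.card_sdiff_of_subset hN
    have hNle : N.card ≤ D.card := Finset.card_le_card hN
    constructor
    · refine ⟨Finset.sdiff_subset, hnQ, ?_⟩
      intro D'' hD'' hsub
      by_contra hQD''
      have hN' : NecessarySet Q D (D \ D'') := by
        refine ⟨Finset.sdiff_subset, ?_⟩
        rwa [Finset.sdiff_sdiff_eq_self hD'']
      have h1 := hmin _ hN'
      have h2 : (D \ D'').card = D.card - D''.card := Finset.card_sdiff_of_subset hD''
      have h3 := Finset.card_lt_card hsub
      have h4 := Finset.card_le_card hD''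
      omega
    · intro D'' hS
      obtain ⟨hD'', hQD'', -⟩ := hS
      have hN' : NecessarySet Q D (D \ D'') := by
        refine ⟨Finset.sdiff_subset, ?_⟩
        rwa [Finset.sdiff_sdiff_eq_self hD'']
      have h1 := hmin _ hN'
      have h2 : (D \ D'').card = D.card - D''.card := Finset.card_sdiff_of_subset hD''
      have h4 := Finset.card_le_card hD''
      omega
  · rintro ⟨⟨-, hQDN, -⟩, hmax⟩
    have hcardN : (D \ N).card = D.card - N.card := Finset.card_sdiff_of_subset hN
    have hNle : N.card ≤ D.card := Finset.card_le_card hN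
    refine ⟨⟨hN, hQDN⟩, ?_⟩
    rintro N' ⟨hN', hQN'⟩
    obtain ⟨T, hT, hTcard⟩ := exists_srepair_above Q D (D \ N') Finset.sdiff_subset hQN'
    have h1 := hmax T hT
    have h2 : (D \ N').card = D.card - N'.card := Finset.card_sdiff_of_subset hN'
    have h3 := Finset.card_le_card hN'
    omega
end
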